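/- Let $r \ge 3$ and $m = \binom{l-1}{r} + \binom{l-2}{r-1} + 1$. Let $C_{r,m}$ be the $r$-graph on vertex set $[l]$ with edge set $[l-1]^{(r)} \cup \{i_1 \cdots i_{r-1} l : i_1 \cdots i_{r-1} \in [l-2]^{(r-1)}\} \cup \{1 \cdots (r-2)(l-1)l\}$. Then $\lambda(C_{r,m}) > \lambda([l-1]^{(r)})$; in particular, the weighting $x_1 = \cdots = x_{l-2} = \frac{1}{l-1}$, $x_{l-1} = x_l = \frac{1}{2(l-1)}$ witnesses $\lambda(C_{r,m}, \vec{x}) > \lambda([l-1]^{(r)})$. -/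

import Mathlib

open Finset

/-- Weightings on vertex set `[n] = {1,…,n}`: nonnegative, summing to 1, zero outside `[n]`. -/
def simplexOn (n : ℕ) (x : ℕ → ℝ) : Prop :=
  (∀ i, 0 ≤ x i) ∧ (∑ i ∈ Finset.Icc 1 n, x i = 1) ∧ ∀ i, i ∉ Finset.Icc 1 n → x i = 0

/-- `λ(F, x) = ∑_{e ∈ F} ∏_{i ∈ e} x i` for a family of finite sets `F`. -/
def lagF (E : Finset (Finset ℕ)) (x : ℕ → ℝ) : ℝ := ∑ e ∈ E, ∏ i ∈ e, x i

/-- The Lagrangian of the hypergraph with edge set `E` on vertex set `[n]`. -/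
noncomputable def lagr (n : ℕ) (E : Finset (Finset ℕ)) : ℝ :=
  sSup {v : ℝ | ∃ x : ℕ → ℝ, simplexOn n x ∧ v = lagF E x}

/-- `E` is the edge set of an `r`-uniform hypergraph on vertex set `[n]`. -/
def isRGraph (r n : ℕ) (E : Finset (Finset ℕ)) : Prop :=
  ∀ e ∈ E, e.card = r ∧ e ⊆ Finset.Icc 1 n

/-- The complete `r`-graph `[l]^(r)`: all `r`-subsets of `[l]`. -/
def completeR (r l : ℕ) : Finset (Finset ℕ) := (Finset.Icc 1 l).powersetCard r

/-- The link `E_i` of vertex `i`. -/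
def link (E : Finset (Finset ℕ)) (i : ℕ) : Finset (Finset ℕ) :=
  (E.filter fun e => i ∈ e).image fun e => e.erase i

/-- The pair link `E_{ij}`. -/
def link2 (E : Finset (Finset ℕ)) (i j : ℕ) : Finset (Finset ℕ) :=
  (E.filter fun e => i ∈ e ∧ j ∈ e).image fun e => (e.erase i).erase j

/-- `E_{i \ j} = E_i ∩ E_j^c`. -/
def linkDiff (E : Finset (Finset ℕ)) (i j : ℕ) : Finset (Finset ℕ) :=
  (link E i).filter fun A => insert j A ∉ E

/-- `A` dominates `B` from below: same size and the `k`-th smallest element of `A`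
is at most the `k`-th smallest element of `B`, for every `k`. -/
def domBelow (A B : Finset ℕ) : Prop :=
  A.card = B.card ∧ ∀ k, (Finset.sort A (· ≤ ·)).getD k 0 ≤ (Finset.sort B (· ≤ ·)).getD k 0

/-- `E` is left-compressed. -/
def leftCompressed (E : Finset (Finset ℕ)) : Prop :=
  ∀ B ∈ E, ∀ A : Finset ℕ, (∀ a ∈ A, 1 ≤ a) → domBelow A B → A ∈ E

/-- The vertex set `T` spans a clique in the `r`-graph `E`. -/
def hasCliqueOn (E : Finset (Finset ℕ)) (r : ℕ) (T : Finset ℕ) : Prop :=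
  ∀ e ⊆ T, e.card = r → e ∈ E

/-- `x` is an optimal weighting for the `r`-graph `E` on `[n]`. -/
def isOptimal (n : ℕ) (E : Finset (Finset ℕ)) (x : ℕ → ℝ) : Prop :=
  simplexOn n x ∧ lagF E x = lagr n E

/-- Number of nonzero weights. -/
noncomputable def suppCard (n : ℕ) (x : ℕ → ℝ) : ℕ := ((Finset.Icc 1 n).filter fun i => x i ≠ 0).card

/-- A minimal optimal weighting: optimal, and any weighting with fewer nonzero
weights has strictly smaller Lagrangian value. -/
def isMinOptimal (n : ℕ) (E : Finset (Finset ℕ)) (x : ℕ → ℝ) : Prop :=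
  isOptimal n E x ∧
    ∀ y : ℕ → ℝ, simplexOn n y → suppCard n y < suppCard n x → lagF E y < lagr n E

/-!
By Maclaurin's inequality `n ^ r e_r(x) ≤ C(n, r) (∑ x) ^ r` for nonnegative `x`, the uniform
weighting is optimal for a clique, so `λ([l-1]^(r)) = C(l-1, r) t ^ r` with `t = 1 / (l-1)`.
Splitting the weight `t` of vertex `l-1` evenly between `l-1` and `l` does not change the
contribution of the clique edges: those through `l-1` and their copies through `l` carry
`t/2 · C(l-2, r-1) t ^ (r-1)` each, together what the edges through `l-1` carried before. The extra
edge `{1, …, r-2, l-1, l}` then adds `t ^ r / 4`, so `λ(C_{r,m}, x) = (C(l-1, r) + 1/4) t ^ r`.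
-/

theorem Multiset.esymm_cons_succ {R : Type*} [CommSemiring R] (a : R) (s : Multiset R) (k : ℕ) :
    (a ::ₘ s).esymm (k + 1) = s.esymm (k + 1) + a * s.esymm k := by
  simp [esymm, powersetCard_cons, sum_map_mul_left]

section Maclaurin

variable {R : Type*} [Field R] [LinearOrder R] [IsStrictOrderedRing R]

theorem maclaurin_step {n k : ℕ} (hn : 0 < n) {u S e₁ e₂ : R} (hu : 0 ≤ u) (hS : 0 ≤ S)
    (h₁ : (n : R) ^ (k + 1) * e₁ ≤ n.choose (k + 1) * S ^ (k + 1))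
    (h₂ : (n : R) ^ k * e₂ ≤ n.choose k * S ^ k) :
    ((n : R) + 1) ^ (k + 1) * (e₁ + u * e₂) ≤ (n + 1).choose (k + 1) * (u + S) ^ (k + 1) := by
  have choose_succ_right : ((k : R) + 1) * n.choose (k + 1) = ((n : R) - k) * n.choose k := by
    rcases le_or_gt k n with hkn | hnk
    · rw [← Nat.cast_sub hkn]
      exact_mod_cast (mul_comm _ _).trans ((Nat.choose_succ_right_eq n k).trans (mul_comm _ _))
    · simp [Nat.choose_eq_zero_of_lt hnk, Nat.choose_eq_zero_of_lt (hnk.trans k.lt_succ_self)]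
  have choose_succ_succ : ((k : R) + 1) * (n + 1).choose (k + 1) = ((n : R) + 1) * n.choose k := by
    rw [mul_comm]
    exact_mod_cast (Nat.add_one_mul_choose_eq n k).symm
  -- Bernoulli: `a ^ (k+1) + (k+1) a ^ k b ≤ (a + b) ^ (k+1)` at `a = (n+1) S`, `a + b = n (u + S)`.
  have bernoulli : ((n : R) + 1) ^ k * S ^ k * ((k + 1) * (n * (u + S)) - k * ((n + 1) * S))
      ≤ (n : R) ^ (k + 1) * (u + S) ^ (k + 1) := by
    have := pow_add_mul_le_add_pow (a := ((n : R) + 1) * S) (b := n * (u + S) - (n + 1) * S)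
      (by positivity) (by nlinarith) (k + 1)
    simp only [add_sub_cancel, add_tsub_cancel_right, Nat.cast_add, Nat.cast_one, mul_pow] at this
    linear_combination this
  have hpos : (0 : R) < (k + 1) * (n : R) ^ (k + 1) := by positivity
  refine le_of_mul_le_mul_left ?_ hpos
  calc (k + 1) * (n : R) ^ (k + 1) * (((n : R) + 1) ^ (k + 1) * (e₁ + u * e₂))
      = ((n : R) + 1) ^ (k + 1) * ((k + 1) * ((n : R) ^ (k + 1) * e₁)
          + (k + 1) * u * n * ((n : R) ^ k * e₂)) := by ring
    _ ≤ ((n : R) + 1) ^ (k + 1) * ((k + 1) * (n.choose (k + 1) * S ^ (k + 1))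
          + (k + 1) * u * n * (n.choose k * S ^ k)) := by gcongr
    _ = (n + 1) * n.choose k *
          (((n : R) + 1) ^ k * S ^ k * ((k + 1) * (n * (u + S)) - k * ((n + 1) * S))) := by
        linear_combination ((n : R) + 1) ^ (k + 1) * S ^ (k + 1) * choose_succ_right
    _ ≤ (n + 1) * n.choose k * ((n : R) ^ (k + 1) * (u + S) ^ (k + 1)) := by gcongr
    _ = (k + 1) * (n : R) ^ (k + 1) * ((n + 1).choose (k + 1) * (u + S) ^ (k + 1)) := by
        linear_combination (-(n : R) ^ (k + 1) * (u + S) ^ (k + 1)) * choose_succ_succ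

theorem Multiset.card_pow_mul_esymm_le (s : Multiset R) (hs : ∀ a ∈ s, 0 ≤ a) (k : ℕ) :
    (card s : R) ^ k * s.esymm k ≤ (card s).choose k * s.sum ^ k := by
  induction s using Multiset.induction_on generalizing k with
  | empty => cases k <;> simp [esymm]
  | cons a s ih =>
    have ha : 0 ≤ a := hs a (mem_cons_self a s)
    have hs' : ∀ b ∈ s, 0 ≤ b := fun b hb => hs b (mem_cons_of_mem hb)
    cases k with
    | zero => simp [esymm]
    | succ k =>
      rw [esymm_cons_succ, card_cons, sum_cons]
      rcases eq_zero_or_pos (card s) with hs0 | hn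
      · cases k <;> simp_all [esymm, powersetCard_zero_right]
        positivity
      · push_cast
        exact maclaurin_step hn ha (sum_nonneg hs') (ih hs' (k + 1)) (ih hs' k)

end Maclaurin

theorem lagF_union {A B : Finset (Finset ℕ)} (h : Disjoint A B) (x : ℕ → ℝ) :
    lagF (A ∪ B) x = lagF A x + lagF B x :=
  sum_union h

theorem lagF_image_insert {F : Finset (Finset ℕ)} {a : ℕ} (h : ∀ e ∈ F, a ∉ e) (x : ℕ → ℝ) :
    lagF (F.image (insert a)) x = x a * lagF F x := by
  have hinj : Set.InjOn (insert a) (F : Set (Finset ℕ)) := fun e he e' he' heq => by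
    rw [← erase_insert (h e he), ← erase_insert (h e' he'), heq]
  rw [lagF, lagF, sum_image hinj, mul_sum]
  exact sum_congr rfl fun e he => prod_insert (h e he)

theorem lagF_powersetCard_eq_esymm (s : Finset ℕ) (x : ℕ → ℝ) (k : ℕ) :
    lagF (s.powersetCard k) x = (s.val.map x).esymm k :=
  (esymm_map_val x s k).symm

theorem lagF_powersetCard_insert {s : Finset ℕ} {a : ℕ} (ha : a ∉ s) (x : ℕ → ℝ) (k : ℕ) :
    lagF ((insert a s).powersetCard (k + 1)) x
      = lagF (s.powersetCard (k + 1)) x + x a * lagF (s.powersetCard k) x := by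
  simp only [lagF_powersetCard_eq_esymm, insert_val_of_notMem ha, Multiset.map_cons,
    Multiset.esymm_cons_succ]

theorem lagF_powersetCard_of_eqOn {s : Finset ℕ} {x : ℕ → ℝ} {c : ℝ} (h : ∀ i ∈ s, x i = c)
    (k : ℕ) : lagF (s.powersetCard k) x = (#s).choose k * c ^ k := by
  have hprod : ∀ e ∈ s.powersetCard k, ∏ i ∈ e, x i = c ^ k := fun e he => by
    obtain ⟨hsub, rfl⟩ := mem_powersetCard.mp he
    exact prod_eq_pow_card fun i hi => h i (hsub hi)
  rw [lagF, sum_congr rfl hprod, sum_const, card_powersetCard, nsmul_eq_mul]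

theorem lagF_le_card {n : ℕ} {E : Finset (Finset ℕ)} {x : ℕ → ℝ} (hx : simplexOn n x) :
    lagF E x ≤ #E := by
  obtain ⟨hx0, hx1, hx2⟩ := hx
  have hle : ∀ i, x i ≤ 1 := fun i => by
    by_cases hi : i ∈ Icc 1 n
    · exact hx1 ▸ single_le_sum (fun j _ => hx0 j) hi
    · simp [hx2 i hi]
  calc lagF E x ≤ ∑ _e ∈ E, (1 : ℝ) :=
        sum_le_sum fun e _ => prod_le_one (fun i _ => hx0 i) fun i _ => hle i
    _ = #E := by simp

theorem lagF_le_lagr {n : ℕ} {E : Finset (Finset ℕ)} {x : ℕ → ℝ} (hx : simplexOn n x) :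
    lagF E x ≤ lagr n E :=
  le_csSup ⟨#E, by rintro _ ⟨y, hy, rfl⟩; exact lagF_le_card hy⟩ ⟨x, hx, rfl⟩

theorem pow_mul_lagF_completeR_le {r n : ℕ} {x : ℕ → ℝ} (hx : simplexOn n x) :
    (n : ℝ) ^ r * lagF (completeR r n) x ≤ n.choose r := by
  have := Multiset.card_pow_mul_esymm_le ((Icc 1 n).val.map x)
    (by simp only [Multiset.mem_map, mem_val]; rintro _ ⟨i, -, rfl⟩; exact hx.1 i) r
  rwa [Multiset.card_map, card_val, Nat.card_Icc, Nat.add_sub_cancel, sum_map_val, hx.2.1, one_pow,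
    mul_one, ← lagF_powersetCard_eq_esymm] at this

theorem lagr_completeR_le (r : ℕ) {n : ℕ} (hn : 0 < n) :
    lagr n (completeR r n) ≤ n.choose r / (n : ℝ) ^ r := by
  refine Real.sSup_le ?_ (by positivity)
  rintro _ ⟨x, hx, rfl⟩
  rw [le_div_iff₀ (by positivity), mul_comm]
  exact pow_mul_lagF_completeR_le hx

def colexGraph (r l : ℕ) : Finset (Finset ℕ) :=
  completeR r (l - 1) ∪
    ((Finset.Icc 1 (l - 2)).powersetCard (r - 1)).image (insert l) ∪
    {insert (l - 1) (insert l (Finset.Icc 1 (r - 2)))}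

noncomputable def colexWeight (l : ℕ) : ℕ → ℝ := fun i =>
  if 1 ≤ i ∧ i ≤ l - 2 then 1 / ((l : ℝ) - 1)
  else if i = l - 1 ∨ i = l then 1 / (2 * ((l : ℝ) - 1)) else 0

section colexWeight

variable {l : ℕ}

theorem colexWeight_of_mem {i : ℕ} (hi : i ∈ Icc 1 (l - 2)) :
    colexWeight l i = 1 / ((l : ℝ) - 1) :=
  if_pos (mem_Icc.mp hi)

theorem colexWeight_pred : colexWeight l (l - 1) = 1 / (2 * ((l : ℝ) - 1)) := by
  rw [colexWeight, if_neg (by omega), if_pos (Or.inl rfl)]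

theorem colexWeight_self : colexWeight l l = 1 / (2 * ((l : ℝ) - 1)) := by
  rw [colexWeight, if_neg (by omega), if_pos (Or.inr rfl)]

theorem colexWeight_simplexOn (hl : 2 ≤ l) : simplexOn l (colexWeight l) := by
  refine ⟨fun i => ?_, ?_, fun i hi => ?_⟩
  · have : (1 : ℝ) < l := by exact_mod_cast hl
    unfold colexWeight
    split_ifs <;> positivity
  · have hIcc : Icc 1 l = insert (l - 1) (insert l (Icc 1 (l - 2))) := by
      ext i; simp only [mem_Icc, mem_insert]; omega
    have hsum :
        ∑ i ∈ Icc 1 (l - 2), colexWeight l i = (l - 2 : ℕ) * (1 / ((l : ℝ) - 1)) := by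
      rw [sum_congr rfl fun i hi => colexWeight_of_mem hi, sum_const, Nat.card_Icc,
        Nat.add_sub_cancel, nsmul_eq_mul]
    rw [hIcc, sum_insert (by simp; omega), sum_insert (by simp; omega), hsum, colexWeight_pred,
      colexWeight_self, Nat.cast_sub hl]
    have : (l : ℝ) - 1 ≠ 0 := by
      have : (2 : ℝ) ≤ l := by exact_mod_cast hl
      linarith
    field_simp
    ring
  · rw [mem_Icc] at hi
    rw [colexWeight, if_neg (by omega), if_neg (by omega)]

end colexWeight

theorem lagF_colexGraph {r l : ℕ} (hl : 1 ≤ l) (hrl : r ≤ l) (x : ℕ → ℝ) :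
    lagF (colexGraph r l) x = lagF (completeR r (l - 1)) x
      + x l * lagF ((Icc 1 (l - 2)).powersetCard (r - 1)) x
      + x (l - 1) * (x l * ∏ i ∈ Icc 1 (r - 2), x i) := by
  have hK : ∀ e ∈ completeR r (l - 1), l ∉ e := fun e he hl' => by
    have := mem_Icc.mp ((mem_powersetCard.mp he).1 hl')
    omega
  have hL : ∀ e ∈ (Icc 1 (l - 2)).powersetCard (r - 1), l - 1 ∉ e ∧ l ∉ e := by
    intro e he
    have hsub := (mem_powersetCard.mp he).1
    constructor <;> intro h <;> have := mem_Icc.mp (hsub h) <;> omega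
  have hKL : Disjoint (completeR r (l - 1))
      (((Icc 1 (l - 2)).powersetCard (r - 1)).image (insert l)) := by
    refine disjoint_left.mpr fun e he he' => ?_
    obtain ⟨e', -, rfl⟩ := mem_image.mp he'
    exact hK _ he (mem_insert_self l e')
  have hf : insert (l - 1) (insert l (Icc 1 (r - 2))) ∉
      completeR r (l - 1) ∪ ((Icc 1 (l - 2)).powersetCard (r - 1)).image (insert l) := by
    rw [mem_union, mem_image, not_or]
    refine ⟨fun h => hK _ h (by simp), ?_⟩
    rintro ⟨e', he', heq⟩
    have : l - 1 ∈ insert l e' := heq ▸ mem_insert_self _ _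
    rcases mem_insert.mp this with h | h
    · omega
    · exact (hL e' he').1 h
  rw [colexGraph, lagF_union (disjoint_singleton_right.mpr hf), lagF_union hKL,
    lagF_image_insert fun e he => (hL e he).2]
  congr 1
  rw [lagF, sum_singleton, prod_insert (by simp; omega), prod_insert (by simp; omega)]

theorem lagF_colexGraph_colexWeight {r l : ℕ} (hr : 2 ≤ r) (hrl : r ≤ l) :
    lagF (colexGraph r l) (colexWeight l)
      = ((l - 1).choose r + 1 / 4) / ((l - 1 : ℕ) : ℝ) ^ r := by
  obtain ⟨k, rfl⟩ := Nat.exists_eq_add_of_le' hr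
  obtain ⟨m, rfl⟩ := Nat.exists_eq_add_of_le' (hr.trans hrl)
  set t : ℝ := 1 / ((↑(m + 2) : ℝ) - 1) with ht
  have hw : ∀ i ∈ Icc 1 m, colexWeight (m + 2) i = t := fun i hi => colexWeight_of_mem hi
  have hIcc : Icc 1 (m + 1) = insert (m + 1) (Icc 1 m) := by
    ext i; simp only [mem_Icc, mem_insert]; omega
  have hprod : ∏ i ∈ Icc 1 k, colexWeight (m + 2) i = t ^ k := by
    rw [prod_eq_pow_card fun i hi => hw i (Icc_subset_Icc_right (by omega) hi), Nat.card_Icc,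
      Nat.add_sub_cancel]
  have hhalf : 1 / (2 * ((↑(m + 2) : ℝ) - 1)) = t / 2 := by rw [ht, div_div, mul_comm]
  have hpred : colexWeight (m + 2) (m + 1) = t / 2 := colexWeight_pred.trans hhalf
  have hself : colexWeight (m + 2) (m + 2) = t / 2 := colexWeight_self.trans hhalf
  have hpow : 1 / ((↑(m + 1) : ℝ)) ^ (k + 2) = t ^ (k + 2) := by
    rw [ht, one_div_pow]
    push_cast
    ring
  rw [lagF_colexGraph (by omega) hrl]
  simp only [Nat.add_sub_cancel, show m + 2 - 1 = m + 1 from rfl, show k + 2 - 1 = k + 1 from rfl,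
    completeR, hIcc]
  rw [lagF_powersetCard_insert (by simp), lagF_powersetCard_of_eqOn hw,
    lagF_powersetCard_of_eqOn hw, hprod, hpred, hself, Nat.choose_succ_succ', Nat.card_Icc,
    Nat.add_sub_cancel, div_eq_mul_one_div _ ((↑(m + 1) : ℝ) ^ (k + 2)), hpow]
  push_cast
  ring

theorem colex_exceeds_clique_lagrangian (r l : ℕ) (hr : 3 ≤ r) (hl : r + 2 ≤ l) :
    let E : Finset (Finset ℕ) :=
      completeR r (l - 1) ∪
        ((Finset.Icc 1 (l - 2)).powersetCard (r - 1)).image (insert l) ∪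
        {insert (l - 1) (insert l (Finset.Icc 1 (r - 2)))}
    let x : ℕ → ℝ := fun i =>
      if 1 ≤ i ∧ i ≤ l - 2 then 1 / ((l : ℝ) - 1)
      else if i = l - 1 ∨ i = l then 1 / (2 * ((l : ℝ) - 1)) else 0
    lagr (l - 1) (completeR r (l - 1)) < lagF E x ∧
      lagF E x ≤ lagr l E ∧
      lagr (l - 1) (completeR r (l - 1)) < lagr l E := by
  intro E x
  have hx : simplexOn l x := colexWeight_simplexOn (by omega)
  have hval : lagF E x = ((l - 1).choose r + 1 / 4) / ((l - 1 : ℕ) : ℝ) ^ r :=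
    lagF_colexGraph_colexWeight (by omega) (by omega)
  have hlt : lagr (l - 1) (completeR r (l - 1)) < lagF E x := by
    have hl1 : 0 < l - 1 := by omega
    calc lagr (l - 1) (completeR r (l - 1)) ≤ (l - 1).choose r / ((l - 1 : ℕ) : ℝ) ^ r :=
          lagr_completeR_le r hl1
      _ < lagF E x := by
          rw [hval]
          gcongr
          linarith
  exact ⟨hlt, lagF_le_lagr hx, hlt.trans_le (lagF_le_lagr hx)⟩
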